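/- arXiv:1207.0550 — 3 statements merged into one kernel-verified Lean document; each statement's English description precedes it below -/
import Mathlib

section
/- Let ρ be a positive semidefinite d×d complex matrix with Tr ρ ≤ 1, and let X and Y be m×d complex matrices such that X†X ≤ Id and Y†Y ≤ Id (in the positive semidefinite order). Then ‖XρX† − YρY†‖₁ ≤ 2√(Tr((X−Y)ρ(X−Y)†)). -/
open scoped Kronecker ComplexConjugate ComplexOrder Matrix

namespace MIP

noncomputable section

abbrev Mat (d : ℕ) := Matrix (Fin d) (Fin d) ℂ

/-- Real part of the trace. -/
def rTr {m : Type*} [Fintype m] (M : Matrix m m ℂ) : ℝ := M.trace.re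

/-- Positive semidefinite square root (`0` if the matrix is not PSD). -/
def psqrt {m : Type*} [Fintype m] [DecidableEq m] (A : Matrix m m ℂ) : Matrix m m ℂ :=
  letI := Classical.propDecidable A.PosSemidef
  if h : A.PosSemidef then
    (h.1.eigenvectorUnitary : Matrix m m ℂ) * Matrix.diagonal ((↑) ∘ Real.sqrt ∘ h.1.eigenvalues) *
      (star h.1.eigenvectorUnitary : Matrix m m ℂ)
  else 0

/-- Loewner order `A ≤ B`. -/
def PSDle {m : Type*} [Fintype m] (A B : Matrix m m ℂ) : Prop := (B - A).PosSemidef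

/-- Trace norm of a square complex matrix. -/
def traceNorm {m : Type*} [Fintype m] [DecidableEq m] (M : Matrix m m ℂ) : ℝ :=
  rTr (psqrt (Mᴴ * M))

/-- `‖X‖_ρ² = Tr (X Xᴴ ρ)`. -/
def rhoNormSq {d : ℕ} (ρ X : Mat d) : ℝ := rTr (X * Xᴴ * ρ)

/-- `⟨ψ| M 0 ⊗ ⋯ ⊗ M (r-1) |ψ⟩` (real part). -/
def tExp {r d : ℕ} (ψ : (Fin r → Fin d) → ℂ) (M : Fin r → Mat d) : ℝ :=
  (∑ v : Fin r → Fin d, ∑ w : Fin r → Fin d,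
      conj (ψ v) * (∏ i, M i (v i) (w i)) * ψ w).re

/-- `⟨ψ| M 0 ⊗ ⋯ ⊗ M (r-1) |ψ⟩` (complex value). -/
def tExpC {r d : ℕ} (ψ : (Fin r → Fin d) → ℂ) (M : Fin r → Mat d) : ℂ :=
  ∑ v : Fin r → Fin d, ∑ w : Fin r → Fin d,
      conj (ψ v) * (∏ i, M i (v i) (w i)) * ψ w

/-- Invariance of a vector in `(ℂ^d)^{⊗r}` under all permutations of the factors. -/
def PermInvariant {r d : ℕ} (ψ : (Fin r → Fin d) → ℂ) : Prop :=
  ∀ σ : Equiv.Perm (Fin r), ∀ v, ψ (v ∘ σ) = ψ v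

/-- Reduced density matrix of `|ψ⟩⟨ψ|` on register `i`. -/
def red1 {r d : ℕ} (ψ : (Fin r → Fin d) → ℂ) (i : Fin r) : Mat d :=
  Matrix.of fun j k => ∑ v : Fin r → Fin d,
    if (v i).val = 0 then ψ (Function.update v i j) * conj (ψ (Function.update v i k)) else 0

/-- Reduced density matrix of `|ψ⟩⟨ψ|` on registers `i₁, i₂`. -/
def red2 {r d : ℕ} (ψ : (Fin r → Fin d) → ℂ) (i₁ i₂ : Fin r) :
    Matrix (Fin d × Fin d) (Fin d × Fin d) ℂ :=
  Matrix.of fun a b => ∑ v : Fin r → Fin d,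
    if (v i₁).val = 0 ∧ (v i₂).val = 0 then
      ψ (Function.update (Function.update v i₁ a.1) i₂ a.2) *
        conj (ψ (Function.update (Function.update v i₁ b.1) i₂ b.2))
    else 0

/-- A symmetric projective strategy with `r` provers, questions in `F^n`,
answers in `F`, on local dimension `d`. -/
structure Strategy (r n d : ℕ) (F : Type*) [Field F] [Fintype F] where
  ψ : (Fin r → Fin d) → ℂ
  A : (Fin n → F) → F → Mat d
  unit : ∑ v : Fin r → Fin d, Complex.normSq (ψ v) = 1
  perm : PermInvariant ψ
  herm : ∀ x a, (A x a).IsHermitian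
  proj : ∀ x a, A x a * A x a = A x a
  complete : ∀ x, ∑ a : F, A x a = 1

variable {F : Type*} [Field F] [Fintype F] [DecidableEq F]

/-- Consistency-test acceptance probability. -/
def consProb {r n d : ℕ} (S : Strategy r n d F) : ℝ :=
  (∑ x : Fin n → F, ∑ a : F, tExp S.ψ fun _ => S.A x a) / (Fintype.card F : ℝ) ^ n

/-- Linearity-test acceptance probability in direction `i`. -/
def linProbDir {r n d : ℕ} (S : Strategy r n d F) (i : Fin n) : ℝ :=
  (∑ x : Fin n → F, ∑ yi : F, ∑ zi : F,
      if yi ≠ x i ∧ zi ≠ x i ∧ yi ≠ zi then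
        ∑ α : F, ∑ β : F,
          tExp S.ψ fun j =>
            if j.val = 0 then S.A x (α * x i + β)
            else if j.val = 1 then S.A (Function.update x i yi) (α * yi + β)
            else if j.val = 2 then S.A (Function.update x i zi) (α * zi + β)
            else 1
      else 0) /
    ((Fintype.card F : ℝ) ^ n * ((Fintype.card F : ℝ) - 1) * ((Fintype.card F : ℝ) - 2))

/-- Linearity-test acceptance probability (averaged over the direction). -/
def linProb {r n d : ℕ} (S : Strategy r n d F) : ℝ :=
  (∑ i : Fin n, linProbDir S i) / n

/-- A multilinear function `F^k → F`. -/
def IsMultilinear {k : ℕ} (g : (Fin k → F) → F) : Prop :=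
  ∀ (i : Fin k) (x : Fin k → F), ∃ α β : F, ∀ t : F, g (Function.update x i t) = α * t + β

/-- First `k` coordinates `x_{≤k}`. -/
def xle {n k : ℕ} (hk : k ≤ n) (x : Fin n → F) : Fin k → F :=
  fun j => x (Fin.castLE hk j)

/-- Last `n - k` coordinates `x_{>k}`. -/
def xgt {n : ℕ} (k : ℕ) (hk : k ≤ n) (x : Fin n → F) : Fin (n - k) → F :=
  fun j => x ⟨k + j.val, by have := j.isLt; omega⟩

/-- The restriction `g(·, x_{k+1},…,x_ℓ)` of `g : F^ℓ → F` to its first `k` variables, the last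
`ℓ - k` variables being substituted with the corresponding coordinates of `x ∈ F^n`. -/
def midRestrict {n k ℓ : ℕ} (hkl : k ≤ ℓ) (hl : ℓ ≤ n) (g : (Fin ℓ → F) → F) (x : Fin n → F) :
    (Fin k → F) → F :=
  fun u => g fun j =>
    if h : j.val < k then u ⟨j.val, h⟩ else x ⟨j.val, by have := j.isLt; omega⟩

/-- A family of sub-measurements of arity `k`, with outcomes the multilinear functions
`F^k → F` (the matrices are indexed by all functions, vanishing on non-multilinear ones). -/
structure SubFamily (n d : ℕ) (F : Type*) [Field F] [Fintype F] [DecidableEq F] (k : ℕ) where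
  P : (Fin (n - k) → F) → ((Fin k → F) → F) → Mat d
  psd : ∀ y g, (P y g).PosSemidef
  ml : ∀ y g, ¬ IsMultilinear g → P y g = 0
  sub : ∀ y, (1 - ∑ g : (Fin k → F) → F, P y g).PosSemidef

/-- `cons(P,Q)` for arities `k ≤ ℓ`. -/
def consF {n d k ℓ : ℕ} (hkl : k ≤ ℓ) (hl : ℓ ≤ n)
    (P : SubFamily n d F k) (Q : SubFamily n d F ℓ)
    (ρ : Matrix (Fin d × Fin d) (Fin d × Fin d) ℂ) : ℝ :=
  (∑ x : Fin n → F, ∑ f : (Fin k → F) → F, ∑ g : (Fin ℓ → F) → F,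
      if f = midRestrict hkl hl g x then
        rTr ((P.P (xgt k (hkl.trans hl) x) f ⊗ₖ Q.P (xgt ℓ hl x) g) * ρ)
      else 0) / (Fintype.card F : ℝ) ^ n

/-- `inc(P,Q)` for arities `k ≤ ℓ`. -/
def incF {n d k ℓ : ℕ} (hkl : k ≤ ℓ) (hl : ℓ ≤ n)
    (P : SubFamily n d F k) (Q : SubFamily n d F ℓ)
    (ρ : Matrix (Fin d × Fin d) (Fin d × Fin d) ℂ) : ℝ :=
  (∑ x : Fin n → F, ∑ f : (Fin k → F) → F, ∑ g : (Fin ℓ → F) → F,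
      if f ≠ midRestrict hkl hl g x then
        rTr ((P.P (xgt k (hkl.trans hl) x) f ⊗ₖ Q.P (xgt ℓ hl x) g) * ρ)
      else 0) / (Fintype.card F : ℝ) ^ n

/-- `cons(P,Q)` for arbitrary arities (symmetric convention). -/
def consSym {n d k ℓ : ℕ} (hk : k ≤ n) (hl : ℓ ≤ n)
    (P : SubFamily n d F k) (Q : SubFamily n d F ℓ)
    (ρ : Matrix (Fin d × Fin d) (Fin d × Fin d) ℂ) : ℝ :=
  if h : k ≤ ℓ then consF h hl P Q ρ else consF (le_of_not_ge h) hk Q P ρ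

/-- `inc(P,A)` where `A` are the strategy's measurements (regarded as the arity-0 family). -/
def incA {n d k : ℕ} (hk : k ≤ n) (P : SubFamily n d F k)
    (A : (Fin n → F) → F → Mat d) (ρ : Matrix (Fin d × Fin d) (Fin d × Fin d) ℂ) : ℝ :=
  (∑ x : Fin n → F, ∑ g : (Fin k → F) → F, ∑ a : F,
      if a ≠ g (xle hk x) then rTr ((P.P (xgt k hk x) g ⊗ₖ A x a) * ρ) else 0) /
    (Fintype.card F : ℝ) ^ n

/-- `Tr_ρ(P)` for a family of sub-measurements, against the one-register density `ρ`. -/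
def trF {n d k : ℕ} (P : SubFamily n d F k) (ρ : Mat d) : ℝ :=
  (∑ y : Fin (n - k) → F, ∑ g : (Fin k → F) → F, rTr (P.P y g * ρ)) /
    (Fintype.card F : ℝ) ^ (n - k)

/-- Merge first `k` coordinates `u` and last `n - k` coordinates `y` into a point of `F^n`. -/
def merge {n k : ℕ} (hk : k ≤ n) (u : Fin k → F) (y : Fin (n - k) → F) : Fin n → F :=
  fun j => if h : j.val < k then u ⟨j.val, h⟩ else y ⟨j.val - k, by have := j.isLt; omega⟩

/-- `E_{x_{≤k}} Ŝ_x^g`, with the last coordinates fixed to `y`. -/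
def avgLow {n d k : ℕ} (hk : k ≤ n)
    (Sh : (Fin n → F) → ((Fin k → F) → F) → Mat d)
    (y : Fin (n - k) → F) (g : (Fin k → F) → F) : Mat d :=
  ((Fintype.card F : ℂ) ^ k)⁻¹ • ∑ u : Fin k → F, Sh (merge hk u y) g

/-- Feasibility for the self-improvement convex program. -/
def Feasible {n d k : ℕ} (hk : k ≤ n) (A : (Fin n → F) → F → Mat d)
    (Sh : (Fin n → F) → ((Fin k → F) → F) → Mat d) : Prop :=
  (∀ x g, ¬ IsMultilinear g → Sh x g = 0) ∧
    ∀ x a, PSDle (∑ g : (Fin k → F) → F,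
      if g (xle hk x) = a then Sh x g * (Sh x g)ᴴ else 0) (A x a)

/-- Objective of the self-improvement convex program. -/
def objective {n d k : ℕ} (hk : k ≤ n) (R : SubFamily n d F k) (ρ : Mat d)
    (Sh : (Fin n → F) → ((Fin k → F) → F) → Mat d) : ℝ :=
  (∑ x : Fin n → F, ∑ g : (Fin k → F) → F,
      rhoNormSq ρ (Sh x g - psqrt (R.P (xgt k hk x) g))) / (Fintype.card F : ℝ) ^ n

/-- Optimum value `ω` of the self-improvement convex program. -/
def progOpt {n d k : ℕ} (hk : k ≤ n) (A : (Fin n → F) → F → Mat d)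
    (R : SubFamily n d F k) (ρ : Mat d) : ℝ :=
  sInf {w | ∃ Sh, Feasible hk A Sh ∧ objective hk R ρ Sh = w}


/-- Remove the `i`-th coordinate: `x_{¬i}`. -/
def removeCoord {n : ℕ} (i : Fin n) (x : Fin n → F) : Fin (n - 1) → F :=
  fun j => if h : j.val < i.val then x ⟨j.val, by have := j.isLt; omega⟩
    else x ⟨j.val + 1, by have := j.isLt; omega⟩

/-- Partial trace over the middle factor of `ℂ^d ⊗ ℂ^d ⊗ ℂ^{d'}`. -/
def ptrace2 {d d' : ℕ} (σ : Matrix (Fin d × Fin d × Fin d') (Fin d × Fin d × Fin d') ℂ) :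
    Matrix (Fin d × Fin d') (Fin d × Fin d') ℂ :=
  Matrix.of fun a b => ∑ m : Fin d, σ (a.1, m, a.2) (b.1, m, b.2)

/-- Partial trace over the first factor of `ℂ^d ⊗ ℂ^{d'}`. -/
def ptrFst {d d' : ℕ} (σ : Matrix (Fin d × Fin d') (Fin d × Fin d') ℂ) :
    Matrix (Fin d') (Fin d') ℂ :=
  Matrix.of fun k l => ∑ m : Fin d, σ (m, k) (m, l)

/-- Partial trace over the second factor of `ℂ^d ⊗ ℂ^{d'}`. -/
def ptrSnd {d d' : ℕ} (σ : Matrix (Fin d × Fin d') (Fin d × Fin d') ℂ) : Mat d :=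
  Matrix.of fun i j => ∑ m : Fin d', σ (i, m) (j, m)

/-!
With `D = X - Y`, the Hermitian matrix `H = X ρ Xᴴ - Y ρ Yᴴ` splits as `D ρ Xᴴ + Y ρ Dᴴ`.
The contraction `W = sign H` satisfies `W H = |H|`, so `‖H‖₁ = Re Tr (W D ρ Xᴴ) + Re Tr (W Y ρ Dᴴ)`.
Each term is bounded by Cauchy–Schwarz for the semi-inner product `⟪A, B⟫ = Tr (B ρ Aᴴ)`:
left multiplication by a contraction does not increase its seminorm, `‖X‖_ρ, ‖Y‖_ρ ≤ √(Tr ρ) ≤ 1`,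
and `‖D‖_ρ² = Tr (D ρ Dᴴ)`.
-/

section
open scoped MatrixOrder

variable {l m n : Type*} [Fintype l] [Fintype m] [Fintype n]

lemma psqrt_eq_cfcSqrt [DecidableEq m] {A : Matrix m m ℂ} (hA : A.PosSemidef) :
    psqrt A = CFC.sqrt A := by
  rw [CFC.sqrt_eq_cfc, cfc_nnreal_eq_real _ A, hA.1.cfc_eq, Matrix.IsHermitian.cfc,
    Unitary.conjStarAlgAut_apply, psqrt, dif_pos hA]
  congr 3
  funext i
  simp [Real.coe_toNNReal', max_eq_left (hA.eigenvalues_nonneg i)]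

lemma traceNorm_eq_re_trace_abs [DecidableEq m] (M : Matrix m m ℂ) :
    traceNorm M = (CFC.abs M).trace.re := by
  rw [traceNorm, rTr, psqrt_eq_cfcSqrt (Matrix.posSemidef_conjTranspose_mul_self M)]
  rfl

lemma exists_conjTranspose_mul_le_one_mul_eq_abs [DecidableEq m] {H : Matrix m m ℂ}
    (hH : H.IsHermitian) : ∃ W : Matrix m m ℂ, Wᴴ * W ≤ 1 ∧ W * H = CFC.abs H := by
  have hsign : ContinuousOn (fun x : ℝ => (SignType.sign x : ℝ)) (spectrum ℝ H) :=
    H.finite_real_spectrum.continuousOn _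
  have hW : IsSelfAdjoint (cfc (fun x : ℝ => (SignType.sign x : ℝ)) H) := cfc_predicate _ H
  refine ⟨cfc (fun x : ℝ => (SignType.sign x : ℝ)) H, ?_, ?_⟩
  · rw [← Matrix.star_eq_conjTranspose, hW.star_eq, ← cfc_mul _ _ H]
    refine cfc_le_one _ H fun x _ => ?_
    rcases lt_trichotomy x 0 with hx | rfl | hx <;> simp [*]
  · conv_lhs => arg 2; rw [← cfc_id' ℝ H]
    rw [← cfc_mul _ _ H, CFC.abs_eq_cfc_norm H hH.isSelfAdjoint]
    exact cfc_congr fun x _ => by simp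

abbrev weightedInnerCore {ρ : Matrix n n ℂ} (hρ : ρ.PosSemidef) :
    PreInnerProductSpace.Core ℂ (Matrix m n ℂ) where
  inner A B := (B * ρ * Aᴴ).trace
  conj_inner_symm A B := by
    simp only [Matrix.mul_assoc, starRingEnd_apply, ← Matrix.trace_conjTranspose,
      Matrix.conjTranspose_mul, Matrix.conjTranspose_conjTranspose, hρ.isHermitian.eq]
  re_inner_nonneg A := (RCLike.nonneg_iff.mp (hρ.mul_mul_conjTranspose_same A).trace_nonneg).1
  add_left := by simp [Matrix.mul_add]
  smul_left := by simp

lemma norm_trace_mul_mul_conjTranspose_le {ρ : Matrix n n ℂ} (hρ : ρ.PosSemidef)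
    (A B : Matrix m n ℂ) :
    ‖(B * ρ * Aᴴ).trace‖ ≤ √(A * ρ * Aᴴ).trace.re * √(B * ρ * Bᴴ).trace.re :=
  letI := weightedInnerCore (m := m) hρ
  InnerProductSpace.Core.norm_inner_le_norm (𝕜 := ℂ) A B

lemma _root_.Matrix.PosSemidef.trace_mul_nonneg [DecidableEq m] {P Q : Matrix m m ℂ}
    (hP : P.PosSemidef) (hQ : Q.PosSemidef) : 0 ≤ (P * Q).trace := by
  obtain ⟨B, rfl⟩ :=
    CStarAlgebra.nonneg_iff_eq_star_mul_self.mp (Matrix.nonneg_iff_posSemidef.mpr hP)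
  rw [Matrix.mul_assoc, Matrix.trace_mul_comm, Matrix.mul_assoc, ← Matrix.mul_assoc,
    Matrix.star_eq_conjTranspose]
  exact (hQ.mul_mul_conjTranspose_same B).trace_nonneg

lemma re_trace_mul_mul_conjTranspose_le [DecidableEq m] {W : Matrix l m ℂ} (hW : Wᴴ * W ≤ 1)
    {ρ : Matrix n n ℂ} (hρ : ρ.PosSemidef) (A : Matrix m n ℂ) :
    (W * A * ρ * (W * A)ᴴ).trace.re ≤ (A * ρ * Aᴴ).trace.re := by
  have key : (A * ρ * Aᴴ).trace - (W * A * ρ * (W * A)ᴴ).trace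
      = ((1 - Wᴴ * W) * (A * ρ * Aᴴ)).trace := by
    rw [Matrix.sub_mul, Matrix.one_mul, Matrix.trace_sub, Matrix.conjTranspose_mul,
      Matrix.mul_assoc Wᴴ, Matrix.trace_mul_comm Wᴴ]
    simp only [Matrix.mul_assoc]
  have := ((Matrix.le_iff.mp hW).trace_mul_nonneg (hρ.mul_mul_conjTranspose_same A)).1
  rw [← key, Complex.zero_re, Complex.sub_re] at this
  linarith

lemma re_trace_mul_mul_conjTranspose_le_re_trace [DecidableEq n] {W : Matrix l n ℂ}
    (hW : Wᴴ * W ≤ 1) {ρ : Matrix n n ℂ} (hρ : ρ.PosSemidef) :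
    (W * ρ * Wᴴ).trace.re ≤ ρ.trace.re := by
  simpa using re_trace_mul_mul_conjTranspose_le hW hρ 1

lemma re_trace_mul_le_sqrt_mul_sqrt [DecidableEq m] {W : Matrix l m ℂ} (hW : Wᴴ * W ≤ 1)
    {ρ : Matrix n n ℂ} (hρ : ρ.PosSemidef) (A : Matrix m n ℂ) (B : Matrix l n ℂ) :
    (W * (A * ρ * Bᴴ)).trace.re ≤ √(A * ρ * Aᴴ).trace.re * √(B * ρ * Bᴴ).trace.re :=
  calc (W * (A * ρ * Bᴴ)).trace.re
      ≤ ‖(W * A * ρ * Bᴴ).trace‖ := by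
        simpa only [Matrix.mul_assoc] using Complex.re_le_norm _
    _ ≤ √(B * ρ * Bᴴ).trace.re * √(W * A * ρ * (W * A)ᴴ).trace.re :=
        norm_trace_mul_mul_conjTranspose_le hρ B (W * A)
    _ ≤ √(B * ρ * Bᴴ).trace.re * √(A * ρ * Aᴴ).trace.re :=
        mul_le_mul_of_nonneg_left
          (Real.sqrt_le_sqrt (re_trace_mul_mul_conjTranspose_le hW hρ A)) (Real.sqrt_nonneg _)
    _ = _ := mul_comm _ _

end

theorem statement10 (d m : ℕ) (ρ : Mat d) (X Y : Matrix (Fin m) (Fin d) ℂ)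
    (hρ : ρ.PosSemidef) (hρ1 : rTr ρ ≤ 1)
    (hX : PSDle (Xᴴ * X) 1) (hY : PSDle (Yᴴ * Y) 1) :
    traceNorm (X * ρ * Xᴴ - Y * ρ * Yᴴ) ≤
      2 * Real.sqrt (rTr ((X - Y) * ρ * (X - Y)ᴴ)) := by
  set D := X - Y
  have hH : (X * ρ * Xᴴ - Y * ρ * Yᴴ).IsHermitian :=
    (Matrix.isHermitian_mul_mul_conjTranspose X hρ.isHermitian).sub
      (Matrix.isHermitian_mul_mul_conjTranspose Y hρ.isHermitian)
  obtain ⟨W, hW, hWH⟩ := exists_conjTranspose_mul_le_one_mul_eq_abs hH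
  have hsplit : X * ρ * Xᴴ - Y * ρ * Yᴴ = D * ρ * Xᴴ + Y * ρ * Dᴴ := by
    simp only [D, Matrix.conjTranspose_sub, Matrix.sub_mul, Matrix.mul_sub]
    abel
  have hXρ : √(X * ρ * Xᴴ).trace.re ≤ 1 := Real.sqrt_le_one.mpr
    ((re_trace_mul_mul_conjTranspose_le_re_trace (Matrix.le_iff.mpr hX) hρ).trans hρ1)
  have hYρ : √(Y * ρ * Yᴴ).trace.re ≤ 1 := Real.sqrt_le_one.mpr
    ((re_trace_mul_mul_conjTranspose_le_re_trace (Matrix.le_iff.mpr hY) hρ).trans hρ1)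
  have ht : 0 ≤ √(D * ρ * Dᴴ).trace.re := Real.sqrt_nonneg _
  calc traceNorm (X * ρ * Xᴴ - Y * ρ * Yᴴ)
      = (W * (D * ρ * Xᴴ)).trace.re + (W * (Y * ρ * Dᴴ)).trace.re := by
        rw [traceNorm_eq_re_trace_abs, ← hWH, hsplit, Matrix.mul_add, Matrix.trace_add,
          Complex.add_re]
    _ ≤ √(D * ρ * Dᴴ).trace.re * √(X * ρ * Xᴴ).trace.re
          + √(Y * ρ * Yᴴ).trace.re * √(D * ρ * Dᴴ).trace.re :=
        add_le_add (re_trace_mul_le_sqrt_mul_sqrt hW hρ D X)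
          (re_trace_mul_le_sqrt_mul_sqrt hW hρ Y D)
    _ ≤ √(D * ρ * Dᴴ).trace.re * 1 + 1 * √(D * ρ * Dᴴ).trace.re := by gcongr
    _ = 2 * √(rTr (D * ρ * Dᴴ)) := by rw [rTr]; ring

end

end MIP
end

section
/- Let I be a finite index set, let {A_i}_{i∈I} and {B_i}_{i∈I} be positive semidefinite d×d complex matrices with Σ_{i∈I} A_i ≤ Id and Σ_{i∈I} B_i ≤ Id, and let ρ be a positive semidefinite d×d matrix with Tr ρ ≤ 1. Then ‖Σ_{i∈I} (√(A_i) ρ √(A_i) − √(B_i) ρ √(B_i))‖₁ ≤ 2 (Σ_{i∈I} Tr((√(A_i) − √(B_i))² ρ))^{1/2}. -/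
/-! Put `M = ∑ᵢ (aᵢ ρ aᵢᴴ - bᵢ ρ bᵢᴴ)` with `aᵢ = √Aᵢ`, `bᵢ = √Bᵢ`. Since `M` is Hermitian,
`‖M‖₁ = Tr (W M)` for the contraction `W = sign M`, and
`W M = ∑ᵢ W aᵢ ρ (aᵢ - bᵢ)ᴴ + ∑ᵢ W (aᵢ - bᵢ) ρ bᵢᴴ`.
By Cauchy–Schwarz for the semi-inner product `⟪X, Y⟫ = Tr (Y ρ Xᴴ)`, each sum is at most
`√(∑ᵢ Tr ((aᵢ - bᵢ)ᴴ (aᵢ - bᵢ) ρ))` times the ρ-norm of the other factor, and that norm is at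
most `1`: multiplying by `W` does not increase it, and `∑ᵢ Tr (aᵢᴴ aᵢ ρ) ≤ Tr ρ ≤ 1`. -/

open scoped Kronecker ComplexConjugate ComplexOrder Matrix

namespace MIP

noncomputable section

variable {F : Type*} [Field F] [Fintype F] [DecidableEq F]

open scoped MatrixOrder

section TraceInequalities

variable {n : Type*} [Fintype n]

lemma rTr_nonneg {A : Matrix n n ℂ} (hA : A.PosSemidef) : 0 ≤ rTr A :=
  (Complex.nonneg_iff.mp hA.trace_nonneg).1

lemma rTr_add (A B : Matrix n n ℂ) : rTr (A + B) = rTr A + rTr B := by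
  rw [rTr, Matrix.trace_add, Complex.add_re, rTr, rTr]

lemma sum_rTr {ι : Type*} [Fintype ι] (f : ι → Matrix n n ℂ) :
    ∑ i, rTr (f i) = rTr (∑ i, f i) := by
  rw [rTr, Matrix.trace_sum, Complex.re_sum]
  rfl

lemma rTr_mul_comm (A B : Matrix n n ℂ) : rTr (A * B) = rTr (B * A) := by
  rw [rTr, Matrix.trace_mul_comm, rTr]

lemma rTr_mul_mul_conjTranspose (X ρ : Matrix n n ℂ) :
    rTr (X * ρ * Xᴴ) = rTr (Xᴴ * X * ρ) := by
  rw [rTr_mul_comm, Matrix.mul_assoc]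

lemma rTr_mul_mul_conjTranspose_le_sqrt_mul_sqrt {ρ : Matrix n n ℂ} (hρ : ρ.PosSemidef)
    (X Y : Matrix n n ℂ) :
    rTr (Y * ρ * Xᴴ) ≤ √(rTr (X * ρ * Xᴴ)) * √(rTr (Y * ρ * Yᴴ)) := by
  let := ρ.toMatrixSeminormedAddCommGroup hρ
  let := ρ.toMatrixInnerProductSpace hρ
  exact re_inner_le_norm (𝕜 := ℂ) X Y

lemma sum_rTr_mul_mul_conjTranspose_le_sqrt_mul_sqrt {ι : Type*} [Fintype ι]
    {ρ : Matrix n n ℂ} (hρ : ρ.PosSemidef) (X Y : ι → Matrix n n ℂ) :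
    ∑ i, rTr (Y i * ρ * (X i)ᴴ) ≤
      √(∑ i, rTr (X i * ρ * (X i)ᴴ)) * √(∑ i, rTr (Y i * ρ * (Y i)ᴴ)) :=
  (Finset.sum_le_sum fun i _ => rTr_mul_mul_conjTranspose_le_sqrt_mul_sqrt hρ (X i) (Y i)).trans <|
    Real.sum_sqrt_mul_sqrt_le _ (fun _ => rTr_nonneg (hρ.mul_mul_conjTranspose_same _))
      (fun _ => rTr_nonneg (hρ.mul_mul_conjTranspose_same _))

variable [DecidableEq n]

lemma psqrt_eq_sqrt {A : Matrix n n ℂ} (hA : A.PosSemidef) : psqrt A = CFC.sqrt A := by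
  rw [psqrt, dif_pos hA, CFC.sqrt_eq_cfc, cfc_nnreal_eq_real _ A hA.nonneg, hA.1.cfc_eq]
  simp only [Matrix.IsHermitian.cfc, Unitary.conjStarAlgAut_apply]
  congr 3
  funext i
  simp [Real.coe_sqrt, hA.eigenvalues_nonneg i]

lemma conjTranspose_psqrt (A : Matrix n n ℂ) : (psqrt A)ᴴ = psqrt A := by
  by_cases hA : A.PosSemidef
  · rw [psqrt_eq_sqrt hA]
    exact (Matrix.nonneg_iff_posSemidef.mp (CFC.sqrt_nonneg A)).1.eq
  · simp [psqrt, dif_neg hA]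

lemma psqrt_mul_self {A : Matrix n n ℂ} (hA : A.PosSemidef) : psqrt A * psqrt A = A := by
  rw [psqrt_eq_sqrt hA, CFC.sqrt_mul_sqrt_self A hA.nonneg]

lemma rTr_mul_nonneg {A B : Matrix n n ℂ} (hA : A.PosSemidef) (hB : B.PosSemidef) :
    0 ≤ rTr (A * B) := by
  set s := CFC.sqrt B
  have hs : sᴴ = s := (Matrix.nonneg_iff_posSemidef.mp (CFC.sqrt_nonneg B)).1.eq
  have : rTr (A * B) = rTr (sᴴ * A * s) := by
    rw [hs, ← CFC.sqrt_mul_sqrt_self B hB.nonneg, ← Matrix.mul_assoc, rTr_mul_comm,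
      Matrix.mul_assoc]
  rw [this]
  exact rTr_nonneg (hA.conjTranspose_mul_mul_same s)

lemma rTr_mul_le_rTr_mul {X Y ρ : Matrix n n ℂ} (hXY : PSDle X Y) (hρ : ρ.PosSemidef) :
    rTr (X * ρ) ≤ rTr (Y * ρ) := by
  have := rTr_mul_nonneg hXY hρ
  rw [Matrix.sub_mul, rTr, Matrix.trace_sub, Complex.sub_re] at this
  exact sub_nonneg.mp this

lemma rTr_mul_le_one {X ρ : Matrix n n ℂ} (hX : PSDle X 1) (hρ : ρ.PosSemidef)
    (hρ1 : rTr ρ ≤ 1) : rTr (X * ρ) ≤ 1 :=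
  (rTr_mul_le_rTr_mul hX hρ).trans (by rwa [Matrix.one_mul])

lemma rTr_conj_le_of_contraction {W T : Matrix n n ℂ} (hW : PSDle (Wᴴ * W) 1)
    (hT : T.PosSemidef) : rTr (W * T * Wᴴ) ≤ rTr T :=
  calc rTr (W * T * Wᴴ) = rTr (Wᴴ * W * T) := by rw [rTr_mul_comm, ← Matrix.mul_assoc]
    _ ≤ rTr (1 * T) := rTr_mul_le_rTr_mul hW hT
    _ = rTr T := by rw [Matrix.one_mul]

lemma rTr_contraction_mul_le {W X ρ : Matrix n n ℂ} (hW : PSDle (Wᴴ * W) 1)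
    (hρ : ρ.PosSemidef) : rTr (W * X * ρ * (W * X)ᴴ) ≤ rTr (X * ρ * Xᴴ) := by
  have : W * X * ρ * (W * X)ᴴ = W * (X * ρ * Xᴴ) * Wᴴ := by
    simp only [Matrix.conjTranspose_mul, Matrix.mul_assoc]
  rw [this]
  exact rTr_conj_le_of_contraction hW (hρ.mul_mul_conjTranspose_same X)

lemma traceNorm_eq_rTr_abs (M : Matrix n n ℂ) : traceNorm M = rTr (CFC.abs M) := by
  rw [traceNorm, psqrt_eq_sqrt (Matrix.posSemidef_conjTranspose_mul_self M)]
  rfl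

lemma exists_contraction_traceNorm_eq {M : Matrix n n ℂ} (hM : M.IsHermitian) :
    ∃ W : Matrix n n ℂ, PSDle (Wᴴ * W) 1 ∧ traceNorm M = rTr (W * M) := by
  have hsign : ContinuousOn Real.sign (spectrum ℝ M) := M.finite_real_spectrum.continuousOn _
  refine ⟨cfc Real.sign M, ?_, ?_⟩
  · rw [PSDle, ← Matrix.le_iff, ← Matrix.star_eq_conjTranspose, ← cfc_star Real.sign M,
      ← cfc_mul _ _ M]
    refine cfc_le_one _ M fun x _ => ?_
    rcases lt_trichotomy x 0 with hx | rfl | hx <;> simp [Real.sign_of_neg, Real.sign_of_pos, *]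
  · have habs : CFC.abs M = cfc Real.sign M * cfc (id : ℝ → ℝ) M := by
      rw [CFC.abs_eq_cfc_norm M hM, ← cfc_mul Real.sign id M]
      refine cfc_congr fun x _ => ?_
      rcases lt_trichotomy x 0 with hx | rfl | hx <;>
        simp [Real.sign_of_neg, Real.sign_of_pos, abs_of_neg, abs_of_pos, *]
    rw [traceNorm_eq_rTr_abs, habs, cfc_id ℝ M]

theorem traceNorm_sum_sub_le {ι : Type*} [Fintype ι] (a b : ι → Matrix n n ℂ)
    {ρ : Matrix n n ℂ} (hρ : ρ.PosSemidef)
    (ha : rTr ((∑ i, (a i)ᴴ * a i) * ρ) ≤ 1) (hb : rTr ((∑ i, (b i)ᴴ * b i) * ρ) ≤ 1) :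
    traceNorm (∑ i, (a i * ρ * (a i)ᴴ - b i * ρ * (b i)ᴴ)) ≤
      2 * √(∑ i, rTr ((a i - b i)ᴴ * (a i - b i) * ρ)) := by
  set S := ∑ i, rTr ((a i - b i)ᴴ * (a i - b i) * ρ)
  have hM : (∑ i, (a i * ρ * (a i)ᴴ - b i * ρ * (b i)ᴴ)).IsHermitian :=
    isSelfAdjoint_sum _ fun i _ => (hρ.mul_mul_conjTranspose_same (a i)).1.sub
      (hρ.mul_mul_conjTranspose_same (b i)).1
  obtain ⟨W, hW, hWM⟩ := exists_contraction_traceNorm_eq hM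
  have hsplit : W * ∑ i, (a i * ρ * (a i)ᴴ - b i * ρ * (b i)ᴴ) =
      ∑ i, W * a i * ρ * (a i - b i)ᴴ + ∑ i, W * (a i - b i) * ρ * (b i)ᴴ := by
    rw [Finset.mul_sum, ← Finset.sum_add_distrib]
    refine Finset.sum_congr rfl fun i _ => ?_
    simp only [Matrix.conjTranspose_sub]
    noncomm_ring
  have hdiff : ∑ i, rTr ((a i - b i) * ρ * (a i - b i)ᴴ) = S := by
    simp only [rTr_mul_mul_conjTranspose, S]
  have hsum_a : ∑ i, rTr (W * a i * ρ * (W * a i)ᴴ) ≤ 1 := by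
    refine (Finset.sum_le_sum fun i _ => rTr_contraction_mul_le hW hρ).trans ?_
    simp only [rTr_mul_mul_conjTranspose]
    rwa [sum_rTr, ← Finset.sum_mul]
  have hsum_b : ∑ i, rTr (b i * ρ * (b i)ᴴ) ≤ 1 := by
    simp only [rTr_mul_mul_conjTranspose]
    rwa [sum_rTr, ← Finset.sum_mul]
  have hsum_diff : ∑ i, rTr (W * (a i - b i) * ρ * (W * (a i - b i))ᴴ) ≤ S :=
    hdiff ▸ Finset.sum_le_sum fun i _ => rTr_contraction_mul_le hW hρ
  calc traceNorm (∑ i, (a i * ρ * (a i)ᴴ - b i * ρ * (b i)ᴴ))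
      = ∑ i, rTr (W * a i * ρ * (a i - b i)ᴴ) + ∑ i, rTr (W * (a i - b i) * ρ * (b i)ᴴ) := by
        rw [hWM, hsplit, rTr_add, sum_rTr, sum_rTr]
    _ ≤ √(∑ i, rTr ((a i - b i) * ρ * (a i - b i)ᴴ)) *
            √(∑ i, rTr (W * a i * ρ * (W * a i)ᴴ)) +
          √(∑ i, rTr (b i * ρ * (b i)ᴴ)) *
            √(∑ i, rTr (W * (a i - b i) * ρ * (W * (a i - b i))ᴴ)) :=
        add_le_add (sum_rTr_mul_mul_conjTranspose_le_sqrt_mul_sqrt hρ _ _)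
          (sum_rTr_mul_mul_conjTranspose_le_sqrt_mul_sqrt hρ _ _)
    _ ≤ √S * 1 + 1 * √S := by
        rw [hdiff]
        exact add_le_add
          (mul_le_mul_of_nonneg_left (Real.sqrt_le_one.mpr hsum_a) (Real.sqrt_nonneg _))
          (mul_le_mul (Real.sqrt_le_one.mpr hsum_b) (Real.sqrt_le_sqrt hsum_diff)
            (Real.sqrt_nonneg _) zero_le_one)
    _ = 2 * √S := by ring

end TraceInequalities

theorem statement11 (d : ℕ) (I : Type) [Fintype I] (A B : I → Mat d) (ρ : Mat d)
    (hA : ∀ i, (A i).PosSemidef) (hB : ∀ i, (B i).PosSemidef)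
    (hAs : PSDle (∑ i, A i) 1) (hBs : PSDle (∑ i, B i) 1)
    (hρ : ρ.PosSemidef) (hρ1 : rTr ρ ≤ 1) :
    traceNorm (∑ i, (psqrt (A i) * ρ * psqrt (A i) - psqrt (B i) * ρ * psqrt (B i))) ≤
      2 * Real.sqrt (∑ i,
        rTr ((psqrt (A i) - psqrt (B i)) * (psqrt (A i) - psqrt (B i)) * ρ)) := by
  have key := traceNorm_sum_sub_le (fun i => psqrt (A i)) (fun i => psqrt (B i)) hρ
    (by simpa only [conjTranspose_psqrt, psqrt_mul_self (hA _)] using rTr_mul_le_one hAs hρ hρ1)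
    (by simpa only [conjTranspose_psqrt, psqrt_mul_self (hB _)] using rTr_mul_le_one hBs hρ hρ1)
  simpa only [conjTranspose_psqrt, Matrix.conjTranspose_sub] using key

end

end MIP
end

section
/- Let n ∈ ℕ, let ε ≥ 0, and let S ⊆ F₂^n be a nonempty finite ε-biased set. Let F be a finite field of characteristic two and let c = (c₁,…,c_n) ∈ F^n with c ≠ 0. Then Pr_{ζ∈S}[Σ_{i=1}^n ζ_i·c_i = 0] ≤ (1+ε)/2, where ζ is uniform in S, ζ_i·c_i means c_i if ζ_i = 1 and 0 if ζ_i = 0, and the sum is taken in F. -/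
open scoped Kronecker ComplexConjugate ComplexOrder Matrix

namespace MIP

noncomputable section

variable {F : Type*} [Field F] [Fintype F] [DecidableEq F]

/- View `F` as a vector space over `𝔽₂` and pick an `𝔽₂`-linear functional `φ` with `φ (cᵢ) ≠ 0`
for some `i`. Whenever `∑ ζᵢ cᵢ = 0` also `∑ φ(cᵢ) ζᵢ = 0`, and the nonzero test vector `(φ (cᵢ))ᵢ`
sees `S` with bias at most `ε`, so it vanishes on at most a `(1 + ε)/2` fraction of `S`. -/

section BiasedSets

open Finset

variable {ι : Type*} [Fintype ι]

def IsBiased (S : Finset (ι → ZMod 2)) (ε : ℝ) : Prop :=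
  ∀ c : ι → ZMod 2, c ≠ 0 →
    |((S.filter fun ζ => ∑ i, c i * ζ i = 0).card : ℝ) / S.card -
      ((S.filter fun ζ => ∑ i, c i * ζ i = 1).card : ℝ) / S.card| ≤ ε

theorem ZMod.eq_zero_or_eq_one (z : ZMod 2) : z = 0 ∨ z = 1 := by
  revert z; decide

theorem card_filter_eq_zero_div_le_of_abs_sub_le {α : Type*} (s : Finset α) (f : α → ZMod 2)
    {ε : ℝ} (h : |((s.filter fun a => f a = 0).card : ℝ) / s.card -
      ((s.filter fun a => f a = 1).card : ℝ) / s.card| ≤ ε) :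
    ((s.filter fun a => f a = 0).card : ℝ) / s.card ≤ (1 + ε) / 2 := by
  have hε : 0 ≤ ε := (abs_nonneg _).trans h
  rcases s.eq_empty_or_nonempty with rfl | hs
  · simp only [card_empty, CharP.cast_eq_zero, div_zero]
    linarith
  have hcard : ((s.filter fun a => f a = 0).card : ℝ) + (s.filter fun a => f a = 1).card =
      s.card := by
    have hone : (s.filter fun a => f a = 1) = s.filter fun a => ¬ f a = 0 :=
      filter_congr fun a _ => by rcases ZMod.eq_zero_or_eq_one (f a) with hz | hz <;> simp [hz]
    rw [hone]
    exact_mod_cast card_filter_add_card_filter_not _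
  have hpos : (0 : ℝ) < s.card := by exact_mod_cast hs.card_pos
  rw [div_sub_div_same, abs_le, le_div_iff₀ hpos, div_le_iff₀ hpos] at h
  rw [div_le_div_iff₀ hpos two_pos]
  linarith [h.2]

variable {V : Type*} [AddCommGroup V] [Module (ZMod 2) V]

theorem ZMod.two_smul_eq_ite (z : ZMod 2) (v : V) : z • v = if z = 1 then v else 0 := by
  rcases ZMod.eq_zero_or_eq_one z with rfl | rfl <;> simp

theorem IsBiased.card_filter_sum_smul_eq_zero_div_le [DecidableEq V] {S : Finset (ι → ZMod 2)}
    {ε : ℝ} (hS : IsBiased S ε) {c : ι → V} (hc : c ≠ 0) :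
    ((S.filter fun ζ => ∑ i, ζ i • c i = 0).card : ℝ) / S.card ≤ (1 + ε) / 2 := by
  obtain ⟨i₀, hi₀⟩ := Function.ne_iff.mp hc
  obtain ⟨φ, hφ⟩ := Module.Projective.exists_dual_ne_zero (ZMod 2) hi₀
  have hφc : (fun i => φ (c i)) ≠ 0 := Function.ne_iff.mpr ⟨i₀, hφ⟩
  have hsum (ζ : ι → ZMod 2) : φ (∑ i, ζ i • c i) = ∑ i, φ (c i) * ζ i := by
    simp only [map_sum, map_smul, smul_eq_mul, mul_comm]
  have hsub : (S.filter fun ζ => ∑ i, ζ i • c i = 0) ⊆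
      S.filter fun ζ => ∑ i, φ (c i) * ζ i = 0 :=
    monotone_filter_right S fun ζ _ hζ => by rw [← hsum, hζ, map_zero]
  calc ((S.filter fun ζ => ∑ i, ζ i • c i = 0).card : ℝ) / S.card
      ≤ ((S.filter fun ζ => ∑ i, φ (c i) * ζ i = 0).card : ℝ) / S.card := by
        gcongr
    _ ≤ (1 + ε) / 2 :=
        card_filter_eq_zero_div_le_of_abs_sub_le S (fun ζ => ∑ i, φ (c i) * ζ i) (hS _ hφc)

end BiasedSets

theorem statement17_general (n : ℕ) (ε : ℝ) (Sb : Finset (Fin n → ZMod 2))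
    (F : Type) [Field F] [DecidableEq F]
    (hbias : ∀ c : Fin n → ZMod 2, c ≠ 0 →
      |((Sb.filter fun ζ => ∑ i, c i * ζ i = 0).card : ℝ) / Sb.card -
        ((Sb.filter fun ζ => ∑ i, c i * ζ i = 1).card : ℝ) / Sb.card| ≤ ε)
    (hchar : CharP F 2)
    (c : Fin n → F) (hc : c ≠ 0) :
    ((Sb.filter fun ζ => (∑ i, if ζ i = 1 then c i else 0) = 0).card : ℝ) / Sb.card ≤
      (1 + ε) / 2 := by
  let := ZMod.algebra F 2
  simpa only [ZMod.two_smul_eq_ite] using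
    IsBiased.card_filter_sum_smul_eq_zero_div_le (S := Sb) hbias hc

theorem statement17 (n : ℕ) (ε : ℝ) (Sb : Finset (Fin n → ZMod 2))
    (F : Type) [Field F] [Fintype F] [DecidableEq F]
    (hε : 0 ≤ ε) (hS : Sb.Nonempty)
    (hbias : ∀ c : Fin n → ZMod 2, c ≠ 0 →
      |((Sb.filter fun ζ => ∑ i, c i * ζ i = 0).card : ℝ) / Sb.card -
        ((Sb.filter fun ζ => ∑ i, c i * ζ i = 1).card : ℝ) / Sb.card| ≤ ε)
    (hchar : CharP F 2)
    (c : Fin n → F) (hc : c ≠ 0) :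
    ((Sb.filter fun ζ => (∑ i, if ζ i = 1 then c i else 0) = 0).card : ℝ) / Sb.card ≤
      (1 + ε) / 2 :=
  statement17_general n ε Sb F hbias hchar c hc

end

end MIP
end
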